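/- Let λ > 0, let g : ℝ → ℝ be continuous with finite limits at +∞ and −∞, and let f be the function defined by: C₋ = (1/(2λ)) ∫_{−∞}^0 e^{λy} g(y) dy, C₊ = (1/(2λ)) ∫_0^∞ e^{−λy} g(y) dy, D₋ = (2p/(p+q))·C₊ + ((q−p)/(p+q))·C₋, D₊ = ((p−q)/(p+q))·C₊ + (2q/(p+q))·C₋, f(x) = C₊ e^{λx} + D₊ e^{−λx} − (1/λ) ∫_0^x sinh(λ(x−y)) g(y) dy for x ≥ 0 and f(x) = C₋ e^{−λx} + D₋ e^{λx} + (1/λ) ∫_x^0 sinh(λ(x−y)) g(y) dy for x ≤ 0. Then for every x ∈ ℝ: ∫_0^∞ e^{−λt} C*(t)g(x) dt = λ·f(x). -/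
import Mathlib

open MeasureTheory Real Filter Set

noncomputable def Cstar (p q t : ℝ) (f : ℝ → ℝ) : ℝ → ℝ := fun x =>
  if |t| ≤ |x| then (f (x + |t|) + f (x - |t|)) / 2
  else if x ≤ 0 then
    (f (x + |t|) + f (x - |t|)) / 2 + (q - p) / (2 * (p + q)) * (f (-x - |t|) - f (x + |t|))
  else
    (f (x + |t|) + f (x - |t|)) / 2 + (p - q) / (2 * (p + q)) * (f (|t| - x) - f (x - |t|))

lemma shift_Ioi (H : ℝ → ℝ) (x a : ℝ) :
    ∫ t in Ioi a, H (t + x) = ∫ s in Ioi (a + x), H s := by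
  rw [← integral_indicator measurableSet_Ioi, ← integral_indicator measurableSet_Ioi,
    ← integral_add_right_eq_self (fun s => (Ioi (a+x)).indicator H s) x]
  congr 1; ext t
  by_cases h : t ∈ Ioi a
  · rw [indicator_of_mem h, indicator_of_mem (by simp at h ⊢; linarith)]
  · rw [indicator_of_notMem h, indicator_of_notMem (by simp at h ⊢; linarith)]

lemma shift_Iio (H : ℝ → ℝ) (x a : ℝ) :
    ∫ t in Iio a, H (t + x) = ∫ s in Iio (a + x), H s := by
  rw [← integral_indicator measurableSet_Iio, ← integral_indicator measurableSet_Iio,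
    ← integral_add_right_eq_self (fun s => (Iio (a+x)).indicator H s) x]
  congr 1; ext t
  by_cases h : t ∈ Iio a
  · rw [indicator_of_mem h, indicator_of_mem (by simp at h ⊢; linarith)]
  · rw [indicator_of_notMem h, indicator_of_notMem (by simp at h ⊢; linarith)]

lemma int_aux (l : ℝ) (hl : 0 < l) (h : ℝ → ℝ) (hm : Measurable h) (M : ℝ)
    (hM : ∀ y, |h y| ≤ M) (a : ℝ) :
    IntegrableOn (fun t => Real.exp (-(l * t)) * h t) (Ioi a) := by
  have h1 : IntegrableOn (fun t => M * Real.exp (-l * t)) (Ioi a) :=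
    (exp_neg_integrableOn_Ioi a hl).const_mul M
  apply Integrable.mono' h1
  · exact ((measurable_exp.comp (measurable_const.mul measurable_id).neg).mul hm).aestronglyMeasurable
  · filter_upwards with t
    rw [norm_mul, norm_of_nonneg (exp_pos _).le, Real.norm_eq_abs, neg_mul]
    calc Real.exp (-(l*t)) * |h t| ≤ Real.exp (-(l*t)) * M :=
          mul_le_mul_of_nonneg_left (hM t) (exp_pos _).le
      _ = M * Real.exp (-(l*t)) := mul_comm _ _

lemma int_aux_Iic (l : ℝ) (hl : 0 < l) (h : ℝ → ℝ) (hm : Measurable h) (M : ℝ)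
    (hM : ∀ y, |h y| ≤ M) (a : ℝ) :
    IntegrableOn (fun s => Real.exp (l * s) * h s) (Iic a) := by
  have A : MeasurableEmbedding (fun x : ℝ => -x) :=
    (Homeomorph.neg ℝ).isClosedEmbedding.measurableEmbedding
  have key : IntegrableOn (fun t => Real.exp (-(l * t)) * h (-t)) (Ioi (-a)) :=
    int_aux l hl (fun t => h (-t)) (hm.comp measurable_neg) M (fun y => hM _) (-a)
  have key2 : IntegrableOn ((fun s => Real.exp (l * s) * h s) ∘ (fun x : ℝ => -x)) (Ioi (-a)) := by
    apply key.congr_fun _ measurableSet_Ioi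
    intro t _
    simp [Function.comp, mul_neg, neg_neg]
  rw [IntegrableOn, ← Measure.map_neg_eq_self (volume : Measure ℝ),
    Measure.restrict_map A.measurable measurableSet_Iic, A.integrable_map_iff]
  have hpre : (fun x : ℝ => -x) ⁻¹' Iic a = Ici (-a) := by ext y; simp [neg_le]
  rw [hpre, ← IntegrableOn, integrableOn_Ici_iff_integrableOn_Ioi]
  exact key2

lemma key_lemma (p q l : ℝ) (hpq : 0 < p + q) (hl : 0 < l)
    (g : ℝ → ℝ) (hg : Continuous g) (M : ℝ) (hM : ∀ y, |g y| ≤ M)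
    (Cm Cp : ℝ)
    (hCm : Cm = (1 / (2 * l)) * ∫ y in Set.Iic (0:ℝ), Real.exp (l * y) * g y)
    (hCp : Cp = (1 / (2 * l)) * ∫ y in Set.Ici (0:ℝ), Real.exp (-(l * y)) * g y)
    (x : ℝ) (hx : 0 ≤ x) :
    ∫ t in Set.Ioi (0:ℝ), Real.exp (-(l * t)) * Cstar p q t g x
      = l * (Cp * Real.exp (l * x)
          + (((p - q) / (p + q)) * Cp + (2 * q / (p + q)) * Cm) * Real.exp (-(l * x))
          - (1 / l) * ∫ y in (0:ℝ)..x, Real.sinh (l * (x - y)) * g y) := by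
  have hgm := hg.measurable
  set H : ℝ → ℝ := fun s => Real.exp (-(l*s)) * g s with hH
  set K : ℝ → ℝ := fun s => Real.exp (l*s) * g s with hK
  set c : ℝ := (p - q) / (2 * (p + q)) with hc
  -- pointwise formulas
  have ha : ∀ t ∈ Ioc (0:ℝ) x, Real.exp (-(l * t)) * Cstar p q t g x
      = Real.exp (-(l*t)) * ((g (x+t) + g (x-t))/2) := by
    intro t ht
    have h1 : |t| = t := abs_of_pos ht.1
    have h2 : |x| = x := abs_of_nonneg hx
    rw [Cstar, if_pos (by rw [h1, h2]; exact ht.2), h1]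
  have hb : ∀ t ∈ Ioi x, Real.exp (-(l * t)) * Cstar p q t g x
      = Real.exp (-(l*t)) * ((g (x+t) + g (x-t))/2)
        + Real.exp (-(l*t)) * (c * (g (t-x) - g (x-t))) := by
    intro t ht
    simp only [mem_Ioi] at ht
    have h1 : |t| = t := abs_of_pos (lt_of_le_of_lt hx ht)
    have h2 : |x| = x := abs_of_nonneg hx
    rw [Cstar, if_neg (by rw [h1, h2]; exact not_le.mpr ht), h1]
    rcases eq_or_lt_of_le hx with h0 | h0
    · rw [if_pos (le_of_eq h0.symm), ← h0, hc]
      ring_nf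
    · rw [if_neg (not_le.mpr h0), hc]
      have : t - x = t - x := rfl
      ring_nf
  -- integrability
  have Ibase : ∀ a : ℝ, IntegrableOn
      (fun t => Real.exp (-(l*t)) * ((g (x+t) + g (x-t))/2)) (Ioi a) := by
    intro a
    refine int_aux l hl _ (by fun_prop) M (fun y => ?_) a
    have := abs_add_le (g (x+y)) (g (x-y))
    rw [abs_div, abs_two]
    have h1 := hM (x+y); have h2 := hM (x-y)
    have hM0 : 0 ≤ M := le_trans (abs_nonneg _) h1
    calc |g (x+y) + g (x-y)|/2 ≤ (|g (x+y)| + |g (x-y)|)/2 := by linarith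
      _ ≤ M := by linarith
  have Icor1 : IntegrableOn (fun t => Real.exp (-(l*t)) * g (t - x)) (Ioi x) :=
    int_aux l hl _ (by fun_prop) M (fun y => hM _) x
  have Icor2 : IntegrableOn (fun t => Real.exp (-(l*t)) * g (x - t)) (Ioi x) :=
    int_aux l hl _ (by fun_prop) M (fun y => hM _) x
  have Icor : IntegrableOn (fun t => Real.exp (-(l*t)) * (c * (g (t-x) - g (x-t)))) (Ioi x) := by
    refine int_aux l hl _ (by fun_prop) (|c| * (2*M)) (fun y => ?_) x
    rw [abs_mul]
    refine mul_le_mul_of_nonneg_left ?_ (abs_nonneg c)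
    have h1 := hM (y - x); have h2 := hM (x - y)
    calc |g (y-x) - g (x-y)| ≤ |g (y-x)| + |g (x-y)| := abs_sub _ _
      _ ≤ 2*M := by linarith
  -- split the integral
  have hsplit : ∫ t in Ioi (0:ℝ), Real.exp (-(l * t)) * Cstar p q t g x
      = (∫ t in Ioc (0:ℝ) x, Real.exp (-(l*t)) * ((g (x+t) + g (x-t))/2))
        + ∫ t in Ioi x, (Real.exp (-(l*t)) * ((g (x+t) + g (x-t))/2)
            + Real.exp (-(l*t)) * (c * (g (t-x) - g (x-t)))) := by
    rw [← Ioc_union_Ioi_eq_Ioi hx, setIntegral_union (Ioc_disjoint_Ioi le_rfl)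
      measurableSet_Ioi]
    · congr 1
      · exact setIntegral_congr_fun measurableSet_Ioc ha
      · exact setIntegral_congr_fun measurableSet_Ioi hb
    · exact (((Ibase 0).mono_set Ioc_subset_Ioi_self).congr_fun
        (fun t ht => (ha t ht).symm) measurableSet_Ioc)
    · have hI : IntegrableOn (fun t => Real.exp (-(l*t)) * ((g (x+t) + g (x-t))/2)
          + Real.exp (-(l*t)) * (c * (g (t-x) - g (x-t)))) (Ioi x) := (Ibase x).add Icor
      exact hI.congr_fun (fun t ht => (hb t ht).symm) measurableSet_Ioi
  -- recombine
  have hrecomb : ∫ t in Ioi (0:ℝ), Real.exp (-(l * t)) * Cstar p q t g x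
      = (∫ t in Ioi (0:ℝ), Real.exp (-(l*t)) * ((g (x+t) + g (x-t))/2))
        + ∫ t in Ioi x, Real.exp (-(l*t)) * (c * (g (t-x) - g (x-t))) := by
    rw [hsplit, integral_add (Ibase x) Icor, ← Ioc_union_Ioi_eq_Ioi hx,
      setIntegral_union (Ioc_disjoint_Ioi le_rfl) measurableSet_Ioi
        ((Ibase 0).mono_set Ioc_subset_Ioi_self) (Ibase x)]
    ring
  -- values of the half-line integrals of H and K
  have hCp' : ∫ s in Ioi (0:ℝ), H s = 2*l*Cp := by
    rw [hCp, ← integral_Ici_eq_integral_Ioi]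
    simp only [hH]
    field_simp
  have hCm' : ∫ s in Iic (0:ℝ), K s = 2*l*Cm := by
    rw [hCm]
    simp only [hK]
    field_simp
  -- base integral
  have IH : ∀ a : ℝ, IntegrableOn H (Ioi a) := fun a =>
    int_aux l hl g hgm M hM a
  have IK : ∀ a : ℝ, IntegrableOn K (Iic a) := fun a =>
    int_aux_Iic l hl g hgm M hM a
  have T1 : ∫ t in Ioi (0:ℝ), Real.exp (-(l*t)) * g (x+t)
      = Real.exp (l*x) * ∫ s in Ioi x, H s := by
    have e1 : ∀ t:ℝ, Real.exp (-(l*t)) * g (x+t) = Real.exp (l*x) * H (t + x) := by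
      intro t
      show _ = Real.exp (l*x) * (Real.exp (-(l*(t+x))) * g (t+x))
      rw [← mul_assoc, ← Real.exp_add, add_comm t x]
      congr 2
      ring
    simp only [e1]
    rw [integral_const_mul, shift_Ioi H x 0, zero_add]
  have T2 : ∫ t in Ioi (0:ℝ), Real.exp (-(l*t)) * g (x-t)
      = Real.exp (-(l*x)) * ∫ s in Iic x, K s := by
    have e2 : ∀ t:ℝ, Real.exp (-(l*t)) * g (x-t)
        = Real.exp (-(l*x)) * (fun u => K (u + x)) (-t) := by
      intro t
      show _ = Real.exp (-(l*x)) * (Real.exp (l*(-t+x)) * g (-t+x))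
      rw [show x - t = -t + x from by ring, ← mul_assoc, ← Real.exp_add]
      congr 2
      ring
    simp only [e2]
    rw [integral_const_mul, integral_comp_neg_Ioi 0 (fun u => K (u + x)), neg_zero,
      integral_Iic_eq_integral_Iio, shift_Iio K x 0, zero_add,
      ← integral_Iic_eq_integral_Iio]
  have hbase : ∫ t in Ioi (0:ℝ), Real.exp (-(l*t)) * ((g (x+t) + g (x-t))/2)
      = (Real.exp (l*x) * (∫ s in Ioi x, H s)
          + Real.exp (-(l*x)) * (∫ s in Iic x, K s)) / 2 := by
    have e3 : ∀ t:ℝ, Real.exp (-(l*t)) * ((g (x+t) + g (x-t))/2)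
        = (Real.exp (-(l*t)) * g (x+t) + Real.exp (-(l*t)) * g (x-t))/2 := fun t => by ring
    simp only [e3]
    rw [integral_div, integral_add (int_aux l hl _ (by fun_prop) M (fun y => hM _) 0)
      (int_aux l hl _ (by fun_prop) M (fun y => hM _) 0), T1, T2]
  -- correction integral
  have T3 : ∫ t in Ioi x, Real.exp (-(l*t)) * g (t-x)
      = Real.exp (-(l*x)) * (2*l*Cp) := by
    have e4 : ∀ t:ℝ, Real.exp (-(l*t)) * g (t-x) = Real.exp (-(l*x)) * H (t + (-x)) := by
      intro t
      show _ = Real.exp (-(l*x)) * (Real.exp (-(l*(t + -x))) * g (t + -x))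
      rw [← mul_assoc, ← Real.exp_add, show t + -x = t - x from by ring]
      congr 2
      ring
    simp only [e4]
    rw [integral_const_mul, shift_Ioi H (-x) x, show x + -x = (0:ℝ) from by ring, hCp']
  have T4 : ∫ t in Ioi x, Real.exp (-(l*t)) * g (x-t)
      = Real.exp (-(l*x)) * (2*l*Cm) := by
    have e5 : ∀ t:ℝ, Real.exp (-(l*t)) * g (x-t)
        = Real.exp (-(l*x)) * (fun u => Real.exp (-(l*u)) * g (-u)) (t + (-x)) := by
      intro t
      show _ = Real.exp (-(l*x)) * (Real.exp (-(l*(t + -x))) * g (-(t + -x)))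
      rw [← mul_assoc, ← Real.exp_add]
      congr 2
      · ring
      · ring
    simp only [e5]
    rw [integral_const_mul, shift_Ioi (fun u => Real.exp (-(l*u)) * g (-u)) (-x) x,
      show x + -x = (0:ℝ) from by ring]
    have e6 : ∀ u:ℝ, Real.exp (-(l*u)) * g (-u) = K (-u) := by
      intro u
      show _ = Real.exp (l*(-u)) * g (-u)
      congr 2
      ring
    simp only [e6]
    rw [integral_comp_neg_Ioi 0 K, neg_zero, hCm']
  have hcor : ∫ t in Ioi x, Real.exp (-(l*t)) * (c * (g (t-x) - g (x-t)))
      = c * (Real.exp (-(l*x)) * (2*l*Cp) - Real.exp (-(l*x)) * (2*l*Cm)) := by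
    have e7 : ∀ t:ℝ, Real.exp (-(l*t)) * (c * (g (t-x) - g (x-t)))
        = c * (Real.exp (-(l*t)) * g (t-x) - Real.exp (-(l*t)) * g (x-t)) := fun t => by ring
    simp only [e7]
    rw [integral_const_mul, integral_sub Icor1 Icor2, T3, T4]
  -- the sinh interval integral
  have hA : ∫ y in (0:ℝ)..x, H y = 2*l*Cp - ∫ s in Ioi x, H s := by
    have hu : ∫ s in Ioi (0:ℝ), H s
        = (∫ s in Ioc (0:ℝ) x, H s) + ∫ s in Ioi x, H s := by
      rw [← Ioc_union_Ioi_eq_Ioi hx, setIntegral_union (Ioc_disjoint_Ioi le_rfl)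
        measurableSet_Ioi ((IH 0).mono_set Ioc_subset_Ioi_self) (IH x)]
    rw [intervalIntegral.integral_of_le hx]
    rw [hCp'] at hu
    linarith
  have hB : ∫ y in (0:ℝ)..x, K y = (∫ s in Iic x, K s) - 2*l*Cm := by
    have hu : ∫ s in Iic x, K s
        = (∫ s in Iic (0:ℝ), K s) + ∫ s in Ioc (0:ℝ) x, K s := by
      rw [← Iic_union_Ioc_eq_Iic hx, setIntegral_union (Iic_disjoint_Ioc le_rfl)
        measurableSet_Ioc (IK 0) ((IK x).mono_set Ioc_subset_Iic_self)]
    rw [intervalIntegral.integral_of_le hx]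
    rw [hCm'] at hu
    linarith
  have hS : ∫ y in (0:ℝ)..x, Real.sinh (l*(x-y)) * g y
      = (Real.exp (l*x) * (∫ y in (0:ℝ)..x, H y)
         - Real.exp (-(l*x)) * (∫ y in (0:ℝ)..x, K y)) / 2 := by
    have e8 : ∀ y:ℝ, Real.sinh (l*(x-y)) * g y
        = (Real.exp (l*x) * H y - Real.exp (-(l*x)) * K y)/2 := by
      intro y
      have h1 : Real.exp (l*x) * Real.exp (-(l*y)) = Real.exp (l*(x-y)) := by
        rw [← Real.exp_add]; congr 1; ring
      have h2 : Real.exp (-(l*x)) * Real.exp (l*y) = Real.exp (-(l*(x-y))) := by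
        rw [← Real.exp_add]; congr 1; ring
      simp only [hH, hK]
      rw [Real.sinh_eq, ← h1, ← h2]
      ring
    rw [intervalIntegral.integral_congr (g := fun y =>
      (Real.exp (l*x) * H y - Real.exp (-(l*x)) * K y)/2) (fun y _ => e8 y)]
    have hHi : IntervalIntegrable H volume 0 x := by
      apply Continuous.intervalIntegrable
      simp only [hH]
      fun_prop
    have hKi : IntervalIntegrable K volume 0 x := by
      apply Continuous.intervalIntegrable
      simp only [hK]
      fun_prop
    rw [intervalIntegral.integral_div, intervalIntegral.integral_sub
      (hHi.const_mul _) (hKi.const_mul _), intervalIntegral.integral_const_mul,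
      intervalIntegral.integral_const_mul]
  -- put everything together
  rw [hrecomb, hbase, hcor, hS, hA, hB, hc]
  have hl' : l ≠ 0 := ne_of_gt hl
  have hpq' : p + q ≠ 0 := ne_of_gt hpq
  field_simp
  ring


lemma bdd_of_tendsto (g : ℝ → ℝ) (hg : Continuous g) (gp gm : ℝ)
    (hgt : Tendsto g atTop (nhds gp)) (hgb : Tendsto g atBot (nhds gm)) :
    ∃ M, ∀ y, |g y| ≤ M := by
  obtain ⟨N1, hN1⟩ := Metric.tendsto_atTop.mp hgt 1 one_pos
  have hgb' : Tendsto (fun y => g (-y)) atTop (nhds gm) :=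
    hgb.comp tendsto_neg_atTop_atBot
  obtain ⟨N2, hN2⟩ := Metric.tendsto_atTop.mp hgb' 1 one_pos
  obtain ⟨C, hC⟩ := (isCompact_Icc : IsCompact (Icc (-N2) N1)).exists_bound_of_continuousOn
    hg.continuousOn
  refine ⟨max C (max (|gp| + 1) (|gm| + 1)), fun y => ?_⟩
  rcases le_total y N1 with h1 | h1
  · rcases le_total (-N2) y with h2 | h2
    · exact le_trans (hC y ⟨h2, h1⟩) (le_max_left _ _)
    · have := hN2 (-y) (by linarith)
      rw [Real.dist_eq, neg_neg] at this
      have : |g y| ≤ |gm| + 1 := by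
        have := abs_sub_abs_le_abs_sub (g y) gm
        linarith [this, le_of_lt ‹|g y - gm| < 1›]
      exact le_trans this (le_trans (le_max_right _ _) (le_max_right _ _))
  · have := hN1 y h1
    rw [Real.dist_eq] at this
    have h3 : |g y| ≤ |gp| + 1 := by
      have h4 := abs_sub_abs_le_abs_sub (g y) gp
      linarith
    exact le_trans h3 (le_trans (le_max_left _ _) (le_max_right _ _))

lemma Cstar_reflect (p q t : ℝ) (g : ℝ → ℝ) (x : ℝ) (hx : x ≤ 0) :
    Cstar p q t g x = Cstar q p t (fun y => g (-y)) (-x) := by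
  unfold Cstar
  simp only [abs_neg]
  by_cases h1 : |t| ≤ |x|
  · rw [if_pos h1, if_pos h1]
    rw [show -(-x + |t|) = x - |t| from by ring, show -(-x - |t|) = x + |t| from by ring]
    ring
  · rw [if_neg h1, if_neg h1]
    rcases eq_or_lt_of_le hx with h0 | h0
    · subst h0
      simp only [neg_zero, zero_add, zero_sub, neg_neg]
      rw [if_pos le_rfl, if_pos le_rfl]
      ring
    · rw [if_pos hx, if_neg (by push_neg; linarith)]
      rw [show -(-x + |t|) = x - |t| from by ring, show -(-x - |t|) = x + |t| from by ring,
        show -(|t| - -x) = -x - |t| from by ring]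
      ring

theorem stmt14 (p q : ℝ) (hp : 0 ≤ p) (hq : 0 ≤ q) (hpq : 0 < p + q)
    (l : ℝ) (hl : 0 < l) (g : ℝ → ℝ) (hg : Continuous g)
    (gp gm : ℝ) (hgt : Tendsto g atTop (nhds gp)) (hgb : Tendsto g atBot (nhds gm))
    (Cm Cp Dm Dp : ℝ)
    (hCm : Cm = (1 / (2 * l)) * ∫ y in Set.Iic (0:ℝ), Real.exp (l * y) * g y)
    (hCp : Cp = (1 / (2 * l)) * ∫ y in Set.Ici (0:ℝ), Real.exp (-(l * y)) * g y)
    (hDm : Dm = (2 * p / (p + q)) * Cp + ((q - p) / (p + q)) * Cm)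
    (hDp : Dp = ((p - q) / (p + q)) * Cp + (2 * q / (p + q)) * Cm)
    (f : ℝ → ℝ)
    (hfp : ∀ x ≥ (0:ℝ), f x = Cp * Real.exp (l * x) + Dp * Real.exp (-(l * x))
        - (1 / l) * ∫ y in (0:ℝ)..x, Real.sinh (l * (x - y)) * g y)
    (hfm : ∀ x ≤ (0:ℝ), f x = Cm * Real.exp (-(l * x)) + Dm * Real.exp (l * x)
        + (1 / l) * ∫ y in x..(0:ℝ), Real.sinh (l * (x - y)) * g y) :
    ∀ x : ℝ, ∫ t in Set.Ioi (0:ℝ), Real.exp (-(l * t)) * Cstar p q t g x = l * f x := by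
  obtain ⟨M, hM⟩ := bdd_of_tendsto g hg gp gm hgt hgb
  intro x
  rcases le_total 0 x with hx | hx
  · rw [hfp x hx, hDp]
    exact key_lemma p q l hpq hl g hg M hM Cm Cp hCm hCp x hx
  · have hgx : ∀ t : ℝ, Cstar p q t g x = Cstar q p t (fun y => g (-y)) (-x) :=
      fun t => Cstar_reflect p q t g x hx
    simp only [hgx]
    have hCm2 : Cp = (1 / (2 * l)) * ∫ y in Set.Iic (0:ℝ), Real.exp (l * y) * g (-y) := by
      have h9 : ∫ y in Set.Iic (0:ℝ), Real.exp (l * y) * g (-y)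
          = ∫ y in Set.Iic (0:ℝ), (fun u => Real.exp (-(l * u)) * g u) (-y) := by
        apply setIntegral_congr_fun measurableSet_Iic
        intro y _
        simp only [mul_neg, neg_neg]
      rw [hCp, h9, integral_comp_neg_Iic 0 (fun u => Real.exp (-(l * u)) * g u), neg_zero,
        integral_Ici_eq_integral_Ioi]
    have hCp2 : Cm = (1 / (2 * l)) * ∫ y in Set.Ici (0:ℝ), Real.exp (-(l * y)) * g (-y) := by
      have h9 : ∫ y in Set.Ici (0:ℝ), Real.exp (-(l * y)) * g (-y)
          = ∫ y in Set.Ioi (0:ℝ), (fun u => Real.exp (l * u) * g u) (-y) := by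
        rw [integral_Ici_eq_integral_Ioi]
        apply setIntegral_congr_fun measurableSet_Ioi
        intro y _
        simp only [mul_neg]
      rw [hCm, h9, integral_comp_neg_Ioi 0 (fun u => Real.exp (l * u) * g u), neg_zero]
    rw [key_lemma q p l (by linarith) hl (fun y => g (-y)) (hg.comp continuous_neg) M
      (fun y => hM _) Cp Cm hCm2 hCp2 (-x) (by linarith)]
    have hint : (∫ y in (0:ℝ)..(-x), Real.sinh (l * (-x - y)) * g (-y))
        = - ∫ y in x..(0:ℝ), Real.sinh (l * (x - y)) * g y := by
      have e : ∀ y : ℝ, Real.sinh (l * (-x - y)) * g (-y)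
          = (fun y => -(Real.sinh (l * (x - y)) * g y)) (-y) := by
        intro y
        show _ = -(Real.sinh (l * (x - -y)) * g (-y))
        rw [show l * (-x - y) = -(l * (x - -y)) from by ring, Real.sinh_neg]
        ring
      rw [intervalIntegral.integral_congr (fun y _ => e y),
        intervalIntegral.integral_comp_neg (fun y => -(Real.sinh (l * (x - y)) * g y)),
        neg_neg, neg_zero, intervalIntegral.integral_neg]
    rw [hint, hfm x hx, hDm]
    rw [show l * -x = -(l * x) from by ring, neg_neg]
    have hl' : l ≠ 0 := ne_of_gt hl
    have hpq' : p + q ≠ 0 := ne_of_gt hpq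
    have hqp' : q + p ≠ 0 := by linarith
    field_simp
    ring
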